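/- arXiv:1704.00582 — 5 statements merged into one kernel-verified Lean document; each statement's English description precedes it below -/
import Mathlib

section
/- Let β : [0,∞) → [0,∞) be continuous with β ≤ β_max. For T < 1/β_max, the operator Γ on C_b([0,T]×[0,∞)) defined by (Γf)(t,a) = f₀(t+a)·exp(−∫₀ᵗ β(a+u)du) + ∫₀ᵗ exp(−∫₀^τ β(a+u)du)·β(a+τ)·f(t−τ,0) dτ is a contraction with Lipschitz constant T·β_max in the sup norm. -/
/-!
Only the Duhamel integral depends on `f`, so `Γf - Γg` is the integral over `[0, t]` of the
waiting-time density `exp (-∫₀^τ β (a + u) du) · β (a + τ)` against `f - g` evaluated at age `0`.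
That density lies between `0` and `β (a + τ) ≤ β_max`, whence `|Γf - Γg| ≤ t · β_max · C`.
-/

open MeasureTheory intervalIntegral

/-- The Duhamel operator `Γ` for the dual renewal equation. -/
noncomputable def Gamma (β f₀ : ℝ → ℝ) (f : ℝ → ℝ → ℝ) (t a : ℝ) : ℝ :=
  f₀ (t + a) * Real.exp (-∫ u in (0:ℝ)..t, β (a + u)) +
    ∫ τ in (0:ℝ)..t, Real.exp (-∫ u in (0:ℝ)..τ, β (a + u)) * β (a + τ) * f (t - τ) 0

noncomputable def waitingDensity (β : ℝ → ℝ) (a τ : ℝ) : ℝ :=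
  Real.exp (-∫ u in (0:ℝ)..τ, β (a + u)) * β (a + τ)

section waitingDensity

variable {β : ℝ → ℝ} {a τ : ℝ}

theorem continuous_waitingDensity (hβ : Continuous β) (a : ℝ) :
    Continuous (waitingDensity β a) := by
  have hshift : Continuous fun u => β (a + u) := hβ.comp (continuous_const_add a)
  exact (continuous_primitive (fun _ _ => hshift.intervalIntegrable _ _) 0).neg.rexp.mul hshift

theorem waitingDensity_nonneg (hβ : ∀ x, 0 ≤ x → 0 ≤ β x) (ha : 0 ≤ a) (hτ : 0 ≤ τ) :
    0 ≤ waitingDensity β a τ :=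
  mul_nonneg (Real.exp_pos _).le (hβ _ (add_nonneg ha hτ))

theorem waitingDensity_le (hβ : ∀ x, 0 ≤ x → 0 ≤ β x) (ha : 0 ≤ a) (hτ : 0 ≤ τ) :
    waitingDensity β a τ ≤ β (a + τ) := by
  have hint : 0 ≤ ∫ u in (0:ℝ)..τ, β (a + u) :=
    integral_nonneg hτ fun u hu => hβ _ (add_nonneg ha hu.1)
  have hexp : Real.exp (-∫ u in (0:ℝ)..τ, β (a + u)) ≤ 1 := by
    rwa [Real.exp_le_one_iff, neg_nonpos]
  exact mul_le_of_le_one_left (hβ _ (add_nonneg ha hτ)) hexp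

end waitingDensity

theorem Gamma_sub_Gamma {β f₀ : ℝ → ℝ} {f g : ℝ → ℝ → ℝ} {t a : ℝ}
    (hf : IntervalIntegrable (fun τ => waitingDensity β a τ * f (t - τ) 0) volume 0 t)
    (hg : IntervalIntegrable (fun τ => waitingDensity β a τ * g (t - τ) 0) volume 0 t) :
    Gamma β f₀ f t a - Gamma β f₀ g t a =
      ∫ τ in (0:ℝ)..t, waitingDensity β a τ * (f (t - τ) 0 - g (t - τ) 0) := by
  unfold waitingDensity at *
  rw [Gamma, Gamma, add_sub_add_left_eq_sub, ← integral_sub hf hg]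
  simp only [mul_sub]

theorem abs_Gamma_sub_Gamma_le {β f₀ : ℝ → ℝ} {f g : ℝ → ℝ → ℝ} {B C t a : ℝ}
    (hβcont : Continuous β) (hβpos : ∀ x, 0 ≤ x → 0 ≤ β x) (hβbd : ∀ x, 0 ≤ x → β x ≤ B)
    (hf : Continuous fun s => f s 0) (hg : Continuous fun s => g s 0)
    (hC : ∀ s ∈ Set.Icc 0 t, |f s 0 - g s 0| ≤ C) (ht : 0 ≤ t) (ha : 0 ≤ a) :
    |Gamma β f₀ f t a - Gamma β f₀ g t a| ≤ t * B * C := by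
  have hK := continuous_waitingDensity hβcont a
  have hshift : Continuous fun τ : ℝ => t - τ := continuous_const.sub continuous_id
  rw [Gamma_sub_Gamma ((hK.mul (hf.comp hshift)).intervalIntegrable _ _)
    ((hK.mul (hg.comp hshift)).intervalIntegrable _ _)]
  have hbound : ∀ τ ∈ Set.uIoc 0 t,
      ‖waitingDensity β a τ * (f (t - τ) 0 - g (t - τ) 0)‖ ≤ B * C := by
    intro τ hτ
    rw [Set.uIoc_of_le ht] at hτ
    have hτ0 : 0 ≤ τ := hτ.1.le
    have hKnn := waitingDensity_nonneg hβpos ha hτ0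
    rw [Real.norm_eq_abs, abs_mul, abs_of_nonneg hKnn]
    exact mul_le_mul ((waitingDensity_le hβpos ha hτ0).trans (hβbd _ (add_nonneg ha hτ0)))
      (hC _ ⟨by linarith [hτ.2], by linarith⟩) (abs_nonneg _) ((hβpos _ ha).trans (hβbd _ ha))
  calc _ ≤ B * C * |t - 0| := norm_integral_le_of_norm_le_const hbound
    _ = t * B * C := by rw [sub_zero, abs_of_nonneg ht]; ring

theorem stmt3_general (β f₀ : ℝ → ℝ) (βmax T : ℝ)
    (hβcont : Continuous β) (hβpos : ∀ a, 0 ≤ a → 0 ≤ β a)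
    (hβbd : ∀ a, 0 ≤ a → β a ≤ βmax)
    (f g : ℝ → ℝ → ℝ)
    (hf : Continuous fun p : ℝ × ℝ => f p.1 p.2)
    (hg : Continuous fun p : ℝ × ℝ => g p.1 p.2)
    (C : ℝ) (hC : ∀ t a, t ∈ Set.Icc 0 T → 0 ≤ a → |f t a - g t a| ≤ C) :
    ∀ t a, t ∈ Set.Icc 0 T → 0 ≤ a →
      |Gamma β f₀ f t a - Gamma β f₀ g t a| ≤ T * βmax * C := by
  intro t a ht ha
  have hage : Continuous fun s : ℝ => (s, (0:ℝ)) := continuous_id.prodMk continuous_const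
  have hC0 : 0 ≤ C := (abs_nonneg _).trans (hC t 0 ht le_rfl)
  have hβmax : 0 ≤ βmax := (hβpos 0 le_rfl).trans (hβbd 0 le_rfl)
  calc |Gamma β f₀ f t a - Gamma β f₀ g t a| ≤ t * βmax * C :=
        abs_Gamma_sub_Gamma_le hβcont hβpos hβbd (hf.comp hage) (hg.comp hage)
          (fun s hs => hC s 0 ⟨hs.1, hs.2.trans ht.2⟩ le_rfl) ht.1 ha
    _ ≤ T * βmax * C := by gcongr; exact ht.2

/-- for `T < 1/β_max` the operator `Γ` is a contraction on
`C_b([0,T]×[0,∞))` with Lipschitz constant `T·β_max` for the sup norm. -/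
theorem stmt3 (β f₀ : ℝ → ℝ) (βmax T : ℝ) (hβmax : 0 < βmax)
    (hβcont : Continuous β) (hβpos : ∀ a, 0 ≤ a → 0 ≤ β a)
    (hβbd : ∀ a, 0 ≤ a → β a ≤ βmax)
    (hT : 0 < T) (hTβ : T < 1 / βmax)
    (f g : ℝ → ℝ → ℝ)
    (hf : Continuous fun p : ℝ × ℝ => f p.1 p.2)
    (hg : Continuous fun p : ℝ × ℝ => g p.1 p.2)
    (C : ℝ) (hC : ∀ t a, t ∈ Set.Icc 0 T → 0 ≤ a → |f t a - g t a| ≤ C) :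
    ∀ t a, t ∈ Set.Icc 0 T → 0 ≤ a →
      |Gamma β f₀ f t a - Gamma β f₀ g t a| ≤ T * βmax * C :=
  stmt3_general β f₀ βmax T hβcont hβpos hβbd f g hf hg C hC
end

section
/- With β continuous, 0 ≤ β ≤ β_max, and f₀ ∈ C_b([0,∞)), the operator Γf(t,a) = f₀(t+a)·exp(−∫₀ᵗ β(a+u)du) + ∫₀ᵗ exp(−∫₀^τ β(a+u)du)·β(a+τ)·f(t−τ,0) dτ maps the closed ball {f : ‖f‖_∞ ≤ ‖f₀‖_∞} of C_b([0,T]×[0,∞)) into itself. -/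
open MeasureTheory intervalIntegral

/-!
With the survival function `S τ = exp (-∫₀^τ β (a + u) du)` we have `-S' = S · β (a + ·)`, so
`Γ f (t, a)` is `f₀ (t + a)` weighted by `S t` plus an average of `f (t - τ, 0)` against the
nonnegative density `S τ β (a + τ)`, whose total mass on `[0, t]` is `1 - S t`. The two weights
sum to one, so `Γ f` is a convex combination of values bounded by `C`.
-/

theorem hasDerivAt_neg_exp_neg_integral {b : ℝ → ℝ} (hb : Continuous b) (τ : ℝ) :
    HasDerivAt (fun s => -Real.exp (-∫ u in (0:ℝ)..s, b u))
      (Real.exp (-∫ u in (0:ℝ)..τ, b u) * b τ) τ :=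
  (hb.integral_hasStrictDerivAt 0 τ).hasDerivAt.neg.exp.neg.congr_deriv (by simp)

theorem continuous_exp_neg_integral_mul {b : ℝ → ℝ} (hb : Continuous b) :
    Continuous fun τ => Real.exp (-∫ u in (0:ℝ)..τ, b u) * b τ :=
  ((continuous_primitive (fun _ _ => hb.intervalIntegrable _ _) 0).neg.rexp).mul hb

theorem integral_exp_neg_integral_mul {b : ℝ → ℝ} (hb : Continuous b) (t : ℝ) :
    ∫ τ in (0:ℝ)..t, Real.exp (-∫ u in (0:ℝ)..τ, b u) * b τ =
      1 - Real.exp (-∫ u in (0:ℝ)..t, b u) := by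
  rw [integral_eq_sub_of_hasDerivAt (fun τ _ => hasDerivAt_neg_exp_neg_integral hb τ)
    ((continuous_exp_neg_integral_mul hb).intervalIntegrable 0 t)]
  simp only [integral_same, neg_zero, Real.exp_zero]
  ring

/-- No integrability of `φ` is needed: a non-integrable integrand has integral `0`. -/
theorem abs_integral_mul_le_mul_integral {w φ : ℝ → ℝ} {a b C : ℝ} (hab : a ≤ b)
    (hw : IntervalIntegrable w volume a b) (hw_nonneg : ∀ τ ∈ Set.Icc a b, 0 ≤ w τ)
    (hφ : ∀ τ ∈ Set.Icc a b, |φ τ| ≤ C) :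
    |∫ τ in a..b, w τ * φ τ| ≤ C * ∫ τ in a..b, w τ := by
  rw [← Real.norm_eq_abs, ← intervalIntegral.integral_const_mul]
  refine norm_integral_le_of_norm_le hab (ae_of_all _ fun τ hτ => ?_) (hw.const_mul C)
  have hτ' : τ ∈ Set.Icc a b := Set.Ioc_subset_Icc_self hτ
  rw [Real.norm_eq_abs, abs_mul, abs_of_nonneg (hw_nonneg τ hτ'), mul_comm]
  exact mul_le_mul_of_nonneg_right (hφ τ hτ') (hw_nonneg τ hτ')

theorem stmt4_general (β f₀ : ℝ → ℝ) (T : ℝ)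
    (hβcont : Continuous β) (hβpos : ∀ a, 0 ≤ a → 0 ≤ β a)
    (C : ℝ) (hf₀bd : ∀ a, 0 ≤ a → |f₀ a| ≤ C)
    (f : ℝ → ℝ → ℝ)
    (hfbd : ∀ t a, t ∈ Set.Icc 0 T → 0 ≤ a → |f t a| ≤ C) :
    ∀ t a, t ∈ Set.Icc 0 T → 0 ≤ a → |Gamma β f₀ f t a| ≤ C := by
  intro t a ⟨ht0, htT⟩ ha
  have hb : Continuous fun u => β (a + u) := by fun_prop
  set S : ℝ → ℝ := fun τ => Real.exp (-∫ u in (0:ℝ)..τ, β (a + u))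
  have hfirst : |f₀ (t + a) * S t| ≤ C * S t := by
    rw [abs_mul, abs_of_pos (Real.exp_pos _)]
    exact mul_le_mul_of_nonneg_right (hf₀bd _ (by linarith)) (Real.exp_pos _).le
  have hsecond : |∫ τ in (0:ℝ)..t, S τ * β (a + τ) * f (t - τ) 0| ≤ C * (1 - S t) := by
    rw [← integral_exp_neg_integral_mul hb t]
    exact abs_integral_mul_le_mul_integral ht0
      ((continuous_exp_neg_integral_mul hb).intervalIntegrable 0 t)
      (fun τ hτ => mul_nonneg (Real.exp_pos _).le (hβpos _ (by linarith [hτ.1])))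
      (fun τ hτ => hfbd _ _ ⟨by linarith [hτ.2], by linarith [hτ.1]⟩ le_rfl)
  calc |Gamma β f₀ f t a|
      ≤ |f₀ (t + a) * S t| + |∫ τ in (0:ℝ)..t, S τ * β (a + τ) * f (t - τ) 0| :=
        abs_add_le _ _
    _ ≤ C * S t + C * (1 - S t) := add_le_add hfirst hsecond
    _ = C := by ring

/-- `Γ` maps the closed ball of radius `‖f₀‖_∞` of `C_b([0,T]×[0,∞))`
into itself. -/
theorem stmt4 (β f₀ : ℝ → ℝ) (βmax T : ℝ) (hβmax : 0 < βmax)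
    (hβcont : Continuous β) (hβpos : ∀ a, 0 ≤ a → 0 ≤ β a)
    (hβbd : ∀ a, 0 ≤ a → β a ≤ βmax)
    (hT : 0 < T)
    (hf₀cont : Continuous f₀) (C : ℝ) (hf₀bd : ∀ a, 0 ≤ a → |f₀ a| ≤ C)
    (f : ℝ → ℝ → ℝ) (hf : Continuous fun p : ℝ × ℝ => f p.1 p.2)
    (hfbd : ∀ t a, t ∈ Set.Icc 0 T → 0 ≤ a → |f t a| ≤ C) :
    ∀ t a, t ∈ Set.Icc 0 T → 0 ≤ a → |Gamma β f₀ f t a| ≤ C :=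
  stmt4_general β f₀ T hβcont hβpos C hf₀bd f hfbd
end

section
/- Let β be continuous, 0 ≤ β ≤ β_max, and let f ∈ C_b([0,∞)×[0,∞)) satisfy the Duhamel formula f(t,a) = f₀(a+t)·exp(−∫₀ᵗβ(a+u)du) + ∫₀ᵗ exp(−∫₀^τ β(a+u)du)·β(a+τ)·f(t−τ,0) dτ for all t,a ≥ 0. If f₀ ≥ 0 then f ≥ 0, and ‖f(t,·)‖_∞ ≤ ‖f₀‖_∞ for all t ≥ 0. -/
/-!
Writing `S_a(τ) = exp (-∫₀^τ β(a+u) du)`, the Duhamel formula reads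
`f(t,a) = S_a(t) f₀(a+t) + ∫₀ᵗ (-S_a)'(τ) f(t-τ,0) dτ`, and `∫₀ᵗ (-S_a)' = 1 - S_a(t)`:
`f(t,a)` is an average of `f₀(a+t)` and of past boundary values `f(·,0)`. So an upper bound
`M` of `f₀` bounds `f(·,0)` by a maximum principle (at a maximiser `s` of `f(·,0)` on `[0,t]`
the formula gives `S_0(s) f(s,0) ≤ S_0(s) M`), and then all of `f`. Lower bounds follow by
linearity, applying this to `-f`.
-/

open MeasureTheory intervalIntegral Set

noncomputable def survival (β : ℝ → ℝ) (a τ : ℝ) : ℝ := Real.exp (-∫ u in (0:ℝ)..τ, β (a + u))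

noncomputable def duhamel (β f₀ g : ℝ → ℝ) (t a : ℝ) : ℝ :=
  f₀ (a + t) * survival β a t + ∫ τ in (0:ℝ)..t, survival β a τ * β (a + τ) * g (t - τ)

def IsDuhamelSolution (β f₀ : ℝ → ℝ) (f : ℝ → ℝ → ℝ) : Prop :=
  ∀ t a, 0 ≤ t → 0 ≤ a → f t a = duhamel β f₀ (fun s => f s 0) t a

variable {β f₀ g : ℝ → ℝ}

theorem hasDerivAt_survival (hβ : Continuous β) (a τ : ℝ) :
    HasDerivAt (survival β a) (-(survival β a τ * β (a + τ))) τ := by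
  have hβa : Continuous fun u => β (a + u) := hβ.comp (continuous_const_add a)
  have hB : HasDerivAt (fun τ => ∫ u in (0:ℝ)..τ, β (a + u)) (β (a + τ)) τ :=
    integral_hasDerivAt_right (hβa.intervalIntegrable _ _) (hβa.stronglyMeasurableAtFilter _ _)
      hβa.continuousAt
  exact hB.neg.exp.congr_deriv (mul_neg _ _)

theorem continuous_survival (hβ : Continuous β) (a : ℝ) : Continuous (survival β a) :=
  continuous_iff_continuousAt.mpr fun τ => (hasDerivAt_survival hβ a τ).continuousAt

theorem integral_survival_mul (hβ : Continuous β) (a t : ℝ) :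
    ∫ τ in (0:ℝ)..t, survival β a τ * β (a + τ) = 1 - survival β a t := by
  have hderiv : ∀ τ ∈ uIcc (0:ℝ) t,
      HasDerivAt (fun τ => -survival β a τ) (survival β a τ * β (a + τ)) τ :=
    fun τ _ => (hasDerivAt_survival hβ a τ).neg.congr_deriv (neg_neg _)
  have hint : IntervalIntegrable (fun τ => survival β a τ * β (a + τ)) volume 0 t :=
    ((continuous_survival hβ a).mul (hβ.comp (continuous_const_add a))).intervalIntegrable _ _
  rw [integral_eq_sub_of_hasDerivAt hderiv hint]
  simp only [survival, integral_same, neg_zero, Real.exp_zero]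
  ring

theorem integral_survival_mul_le (hβ : Continuous β) (hβnn : ∀ x, 0 ≤ x → 0 ≤ β x)
    (hg : Continuous g) {a t M : ℝ} (ha : 0 ≤ a) (ht : 0 ≤ t)
    (hgM : ∀ s ∈ Icc 0 t, g s ≤ M) :
    ∫ τ in (0:ℝ)..t, survival β a τ * β (a + τ) * g (t - τ) ≤ (1 - survival β a t) * M := by
  have hk : Continuous fun τ => survival β a τ * β (a + τ) :=
    (continuous_survival hβ a).mul (hβ.comp (continuous_const_add a))
  rw [← integral_survival_mul hβ, ← intervalIntegral.integral_mul_const]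
  refine integral_mono_on ht ((hk.mul (hg.comp (continuous_sub_left t))).intervalIntegrable _ _)
    ((hk.mul continuous_const).intervalIntegrable _ _) fun τ hτ => ?_
  exact mul_le_mul_of_nonneg_left (hgM _ ⟨by linarith [hτ.2], by linarith [hτ.1]⟩)
    (mul_nonneg (Real.exp_nonneg _) (hβnn _ (add_nonneg ha hτ.1)))

theorem duhamel_le (hβ : Continuous β) (hβnn : ∀ x, 0 ≤ x → 0 ≤ β x) (hg : Continuous g)
    {a t M : ℝ} (ha : 0 ≤ a) (ht : 0 ≤ t) (hf₀M : f₀ (a + t) ≤ M)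
    (hgM : ∀ s ∈ Icc 0 t, g s ≤ M) :
    duhamel β f₀ g t a ≤ M := by
  have hI := integral_survival_mul_le hβ hβnn hg ha ht hgM
  have hS : 0 ≤ survival β a t := Real.exp_nonneg _
  unfold duhamel
  nlinarith

theorem duhamel_neg (β f₀ g : ℝ → ℝ) (t a : ℝ) :
    duhamel β (fun x => -f₀ x) (fun s => -g s) t a = -duhamel β f₀ g t a := by
  simp only [duhamel, mul_neg, intervalIntegral.integral_neg, neg_mul, neg_add]

namespace IsDuhamelSolution

variable {f : ℝ → ℝ → ℝ}

theorem neg (hf : IsDuhamelSolution β f₀ f) :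
    IsDuhamelSolution β (fun x => -f₀ x) (fun t a => -f t a) := fun t a ht ha => by
  rw [duhamel_neg, ← hf t a ht ha]

theorem boundary_le_of_forall_le (hf : IsDuhamelSolution β f₀ f) (hβ : Continuous β)
    (hβnn : ∀ x, 0 ≤ x → 0 ≤ β x) (hg : Continuous fun s => f s 0) {M : ℝ}
    (hf₀M : ∀ x, 0 ≤ x → f₀ x ≤ M) {t : ℝ} (ht : 0 ≤ t) :
    f t 0 ≤ M := by
  obtain ⟨s, ⟨hs0, hst⟩, hsmax⟩ :=
    isCompact_Icc.exists_isMaxOn (nonempty_Icc.mpr ht) hg.continuousOn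
  have hmax : ∀ r ∈ Icc 0 s, f r 0 ≤ f s 0 := fun r hr => hsmax ⟨hr.1, hr.2.trans hst⟩
  have hI := integral_survival_mul_le hβ hβnn hg le_rfl hs0 hmax
  have hfs : f s 0 = f₀ (0 + s) * survival β 0 s + _ := hf s 0 hs0 le_rfl
  have hS : 0 < survival β 0 s := Real.exp_pos _
  have hf₀s := hf₀M (0 + s) (by linarith)
  have hfsM : f s 0 ≤ M := by nlinarith
  exact (hsmax ⟨ht, le_rfl⟩).trans hfsM

theorem le_of_forall_le (hf : IsDuhamelSolution β f₀ f) (hβ : Continuous β)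
    (hβnn : ∀ x, 0 ≤ x → 0 ≤ β x) (hg : Continuous fun s => f s 0) {M : ℝ}
    (hf₀M : ∀ x, 0 ≤ x → f₀ x ≤ M) {t a : ℝ} (ht : 0 ≤ t) (ha : 0 ≤ a) :
    f t a ≤ M := by
  rw [hf t a ht ha]
  exact duhamel_le hβ hβnn hg ha ht (hf₀M _ (add_nonneg ha ht))
    fun s hs => hf.boundary_le_of_forall_le hβ hβnn hg hf₀M hs.1

end IsDuhamelSolution

theorem stmt6_general (β f₀ : ℝ → ℝ) (hβcont : Continuous β)
    (hβpos : ∀ a, 0 ≤ a → 0 ≤ β a)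
    (C : ℝ) (hf₀bd : ∀ a, 0 ≤ a → |f₀ a| ≤ C)
    (f : ℝ → ℝ → ℝ) (hfcont : Continuous fun p : ℝ × ℝ => f p.1 p.2)
    (hDuh : ∀ t a, 0 ≤ t → 0 ≤ a →
      f t a = f₀ (a + t) * Real.exp (-∫ u in (0:ℝ)..t, β (a + u)) +
        ∫ τ in (0:ℝ)..t, Real.exp (-∫ u in (0:ℝ)..τ, β (a + u)) * β (a + τ) * f (t - τ) 0) :
    ((∀ a, 0 ≤ a → 0 ≤ f₀ a) → ∀ t a, 0 ≤ t → 0 ≤ a → 0 ≤ f t a) ∧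
    (∀ t a, 0 ≤ t → 0 ≤ a → |f t a| ≤ C) := by
  have hsol : IsDuhamelSolution β f₀ f := hDuh
  have hg : Continuous fun s => f s 0 := hfcont.comp (continuous_id.prodMk continuous_const)
  refine ⟨fun hf₀nn t a ht ha => ?_, fun t a ht ha => abs_le.mpr ⟨?_, ?_⟩⟩
  · have := hsol.neg.le_of_forall_le (M := 0) hβcont hβpos hg.neg
      (fun x hx => neg_nonpos.mpr (hf₀nn x hx)) ht ha
    linarith
  · have := hsol.neg.le_of_forall_le (M := C) hβcont hβpos hg.neg
      (fun x hx => neg_le.mp (abs_le.mp (hf₀bd x hx)).1) ht ha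
    linarith
  · exact hsol.le_of_forall_le hβcont hβpos hg (fun x hx => (abs_le.mp (hf₀bd x hx)).2) ht ha

/-- a bounded continuous solution of the Duhamel formula for the dual
renewal equation is nonnegative if the initial datum is, and satisfies the sup-norm
bound `‖f(t,·)‖_∞ ≤ ‖f₀‖_∞`. -/
theorem stmt6 (β f₀ : ℝ → ℝ) (βmax : ℝ) (hβcont : Continuous β)
    (hβpos : ∀ a, 0 ≤ a → 0 ≤ β a) (hβbd : ∀ a, 0 ≤ a → β a ≤ βmax)
    (hf₀cont : Continuous f₀) (C : ℝ) (hf₀bd : ∀ a, 0 ≤ a → |f₀ a| ≤ C)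
    (f : ℝ → ℝ → ℝ) (hfcont : Continuous fun p : ℝ × ℝ => f p.1 p.2)
    (hfbdd : ∃ D, ∀ t a, 0 ≤ t → 0 ≤ a → |f t a| ≤ D)
    (hDuh : ∀ t a, 0 ≤ t → 0 ≤ a →
      f t a = f₀ (a + t) * Real.exp (-∫ u in (0:ℝ)..t, β (a + u)) +
        ∫ τ in (0:ℝ)..t, Real.exp (-∫ u in (0:ℝ)..τ, β (a + u)) * β (a + τ) * f (t - τ) 0) :
    ((∀ a, 0 ≤ a → 0 ≤ f₀ a) → ∀ t a, 0 ≤ t → 0 ≤ a → 0 ≤ f t a) ∧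
    (∀ t a, 0 ≤ t → 0 ≤ a → |f t a| ≤ C) :=
  stmt6_general β f₀ hβcont hβpos C hf₀bd f hfcont hDuh
end

section
/- Let β be continuous, 0 ≤ β ≤ β_max, and let f₀, g₀ ∈ C_b([0,∞)) agree on [0,A] for some A > 0. If f and g are the unique solutions of the Duhamel fixed-point equation f(t,a) = f₀(a+t)exp(−∫₀ᵗβ(a+u)du) + ∫₀ᵗ exp(−∫₀^τβ(a+u)du)β(a+τ)f(t−τ,0)dτ with data f₀ and g₀ respectively, then for every T ∈ (0,A), f(t,a) = g(t,a) for all t ∈ [0,T] and a ∈ [0,A−T]. -/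
/-!
Along the characteristic through `(t, a)` the Duhamel formula involves the datum only at `a + t`,
while the renewal term feeds back the boundary trace `f (t - τ) 0`. Hence on the cone
`a + t ≤ A` the difference of two solutions is a Volterra convolution of the difference of the
boundary traces with a continuous kernel. Taking `a = 0` gives a homogeneous Volterra equation
for the trace difference on `[0, A]`; the kernel is bounded there by compactness, so Grönwall's
inequality forces the trace difference to vanish, and with it the convolution at every point of
the cone.
-/

open MeasureTheory intervalIntegral

/-- `f` is a bounded continuous solution of the Duhamel fixed-point formulation of
the dual renewal equation with initial datum `f₀`. -/
def IsDuhamelSol (β f₀ : ℝ → ℝ) (f : ℝ → ℝ → ℝ) : Prop :=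
  (Continuous fun p : ℝ × ℝ => f p.1 p.2) ∧
  (∃ C, ∀ t a, 0 ≤ t → 0 ≤ a → |f t a| ≤ C) ∧
  ∀ t a, 0 ≤ t → 0 ≤ a →
    f t a = f₀ (a + t) * Real.exp (-∫ u in (0:ℝ)..t, β (a + u)) +
      ∫ τ in (0:ℝ)..t, Real.exp (-∫ u in (0:ℝ)..τ, β (a + u)) * β (a + τ) * f (t - τ) 0

open Set

section Volterra

variable {E : Type*} [NormedAddCommGroup E]

theorem eq_zero_of_norm_le_mul_integral_norm {h : ℝ → E} {K A : ℝ} (hh : Continuous h)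
    (bound : ∀ t ∈ Icc 0 A, ‖h t‖ ≤ K * ∫ s in (0:ℝ)..t, ‖h s‖) :
    ∀ t ∈ Icc 0 A, h t = 0 := by
  have hprim : ∀ t ∈ Icc 0 A, ∫ s in (0:ℝ)..t, ‖h s‖ = 0 := by
    refine eq_zero_of_abs_deriv_le_mul_abs_self_of_eq_zero_right (f' := fun t => ‖h t‖) (K := K)
      (continuous_primitive (fun _ _ => hh.norm.intervalIntegrable _ _) 0).continuousOn
      (fun x _ => (hh.norm.integral_hasStrictDerivAt 0 x).hasDerivAt.hasDerivWithinAt)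
      integral_same (fun x hx => ?_)
    rw [norm_norm, Real.norm_of_nonneg (integral_nonneg hx.1 fun _ _ => norm_nonneg _)]
    exact bound x (Ico_subset_Icc_self hx)
  intro t ht
  simpa [hprim t ht] using bound t ht

theorem eq_zero_of_eq_integral_smul_sub [NormedSpace ℝ E] {k : ℝ → ℝ} {h : ℝ → E} {M A : ℝ}
    (hh : Continuous h) (hk : ∀ τ ∈ Icc 0 A, ‖k τ‖ ≤ M)
    (heq : ∀ t ∈ Icc 0 A, h t = ∫ τ in (0:ℝ)..t, k τ • h (t - τ)) :
    ∀ t ∈ Icc 0 A, h t = 0 := by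
  refine eq_zero_of_norm_le_mul_integral_norm (K := M) hh fun t ht => ?_
  have hint : IntervalIntegrable (fun τ => M * ‖h (t - τ)‖) volume 0 t :=
    (continuous_const.mul (hh.comp (continuous_sub_left t)).norm).intervalIntegrable _ _
  calc ‖h t‖ = ‖∫ τ in (0:ℝ)..t, k τ • h (t - τ)‖ := by rw [← heq t ht]
    _ ≤ ∫ τ in (0:ℝ)..t, M * ‖h (t - τ)‖ := by
      refine norm_integral_le_of_norm_le ht.1 (ae_of_all _ fun τ hτ => ?_) hint
      rw [norm_smul]
      exact mul_le_mul_of_nonneg_right (hk τ ⟨hτ.1.le, hτ.2.trans ht.2⟩) (norm_nonneg _)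
    _ = M * ∫ s in (0:ℝ)..t, ‖h s‖ := by
      rw [intervalIntegral.integral_const_mul, integral_comp_sub_left (fun s => ‖h s‖), sub_self,
        sub_zero]

end Volterra

noncomputable def duhamelKernel (β : ℝ → ℝ) (a τ : ℝ) : ℝ :=
  Real.exp (-∫ u in (0:ℝ)..τ, β (a + u)) * β (a + τ)

theorem continuous_duhamelKernel {β : ℝ → ℝ} (hβ : Continuous β) (a : ℝ) :
    Continuous (duhamelKernel β a) := by
  have hβa : Continuous fun u => β (a + u) := hβ.comp (continuous_const_add a)
  exact (continuous_primitive (fun _ _ => hβa.intervalIntegrable _ _) 0).neg.rexp.mul hβa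

namespace IsDuhamelSol

variable {β f₀ g₀ : ℝ → ℝ} {f g : ℝ → ℝ → ℝ}

theorem continuous_slice (hf : IsDuhamelSol β f₀ f) (a : ℝ) : Continuous fun t => f t a :=
  hf.1.comp (continuous_id.prodMk continuous_const)

theorem sub_eq_integral (hβ : Continuous β) (hf : IsDuhamelSol β f₀ f)
    (hg : IsDuhamelSol β g₀ g) {t a : ℝ} (ht : 0 ≤ t) (ha : 0 ≤ a)
    (hdata : f₀ (a + t) = g₀ (a + t)) :
    f t a - g t a = ∫ τ in (0:ℝ)..t, duhamelKernel β a τ * (f (t - τ) 0 - g (t - τ) 0) := by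
  have hint : ∀ F : ℝ → ℝ, Continuous F →
      IntervalIntegrable (fun τ => duhamelKernel β a τ * F (t - τ)) volume 0 t := fun F hF =>
    ((continuous_duhamelKernel hβ a).mul (hF.comp (continuous_sub_left t))).intervalIntegrable _ _
  rw [hf.2.2 t a ht ha, hg.2.2 t a ht ha, hdata, add_sub_add_left_eq_sub]
  simp only [duhamelKernel, mul_sub]
  exact (integral_sub (hint _ (hf.continuous_slice 0)) (hint _ (hg.continuous_slice 0))).symm

end IsDuhamelSol

theorem stmt7_general (β f₀ g₀ : ℝ → ℝ) (hβcont : Continuous β)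
    (A : ℝ) (hagree : ∀ a, a ∈ Set.Icc 0 A → f₀ a = g₀ a)
    (f g : ℝ → ℝ → ℝ) (hf : IsDuhamelSol β f₀ f) (hg : IsDuhamelSol β g₀ g) :
    ∀ T, T ∈ Set.Ioo 0 A → ∀ t a, t ∈ Set.Icc 0 T → a ∈ Set.Icc 0 (A - T) →
      f t a = g t a := by
  rintro T ⟨-, hTA⟩ t a ⟨ht₀, htT⟩ ⟨ha₀, haA⟩
  have hdiff : ∀ t a, 0 ≤ t → 0 ≤ a → a + t ≤ A → f t a - g t a =
      ∫ τ in (0:ℝ)..t, duhamelKernel β a τ * (f (t - τ) 0 - g (t - τ) 0) :=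
    fun t a ht ha hta => hf.sub_eq_integral hβcont hg ht ha (hagree _ ⟨by linarith, hta⟩)
  obtain ⟨M, hM⟩ := isCompact_Icc.exists_bound_of_continuousOn (s := Icc 0 A)
    (continuous_duhamelKernel hβcont 0).continuousOn
  have htrace : ∀ s ∈ Icc 0 A, f s 0 - g s 0 = 0 :=
    eq_zero_of_eq_integral_smul_sub ((hf.continuous_slice 0).sub (hg.continuous_slice 0)) hM
      fun s hs => by simpa using hdiff s 0 hs.1 le_rfl (by simpa using hs.2)
  rw [← sub_eq_zero, hdiff t a ht₀ ha₀ (by linarith)]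
  refine (integral_congr fun τ hτ => ?_).trans integral_zero
  rw [uIcc_of_le ht₀] at hτ
  simp only [htrace (t - τ) ⟨by linarith [hτ.2], by linarith [hτ.1]⟩, mul_zero]

/-- finite speed of propagation — if the initial data agree on `[0,A]`,
the solutions agree on `[0,T] × [0,A−T]` for every `T ∈ (0,A)`. -/
theorem stmt7 (β f₀ g₀ : ℝ → ℝ) (βmax : ℝ) (hβcont : Continuous β)
    (hβpos : ∀ a, 0 ≤ a → 0 ≤ β a) (hβbd : ∀ a, 0 ≤ a → β a ≤ βmax)
    (hf₀ : Continuous f₀) (hg₀ : Continuous g₀)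
    (hf₀bd : ∃ C, ∀ a, 0 ≤ a → |f₀ a| ≤ C) (hg₀bd : ∃ C, ∀ a, 0 ≤ a → |g₀ a| ≤ C)
    (A : ℝ) (hA : 0 < A) (hagree : ∀ a, a ∈ Set.Icc 0 A → f₀ a = g₀ a)
    (f g : ℝ → ℝ → ℝ) (hf : IsDuhamelSol β f₀ f) (hg : IsDuhamelSol β g₀ g) :
    ∀ T, T ∈ Set.Ioo 0 A → ∀ t a, t ∈ Set.Icc 0 T → a ∈ Set.Icc 0 (A - T) →
      f t a = g t a :=
  stmt7_general β f₀ g₀ hβcont A hagree f g hf hg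
end

section
/- Let (M_t)_{t≥0} be the solution semigroup of the dual renewal equation on C_b([0,∞)), where M_t f₀ = f(t,·) with f the unique solution of the Duhamel formula. Then M_0 f = f and M_{t+s} f = M_t(M_s f) for all s, t ≥ 0 and f ∈ C_b([0,∞)). -/
/-! Uniqueness of Duhamel solutions reduces the semigroup law to one computation: if `f` solves
the Duhamel formula with datum `f₀`, then so does the time shift `(t, a) ↦ f (t + s) a` with
datum `f s`. To see it, split `∫₀^{t+s}` at `t`, substitute `τ ↦ t + τ` in the second piece and
factor the survival probability `exp (-∫₀^{t+τ} β (a + ·))` as the product of the survival up to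
time `t` and the survival from age `a + t` onwards. -/

open MeasureTheory intervalIntegral

theorem integral_zero_add_eq_add_integral_comp_add {E : Type*} [NormedAddCommGroup E]
    [NormedSpace ℝ E] {g : ℝ → E} {t x : ℝ} (h₁ : IntervalIntegrable g volume 0 t)
    (h₂ : IntervalIntegrable g volume t (t + x)) :
    ∫ u in (0:ℝ)..(t + x), g u = (∫ u in (0:ℝ)..t, g u) + ∫ u in (0:ℝ)..x, g (t + u) := by
  rw [← integral_add_adjacent_intervals h₁ h₂, integral_comp_add_left, add_zero]

theorem exp_neg_integral_zero_add {β : ℝ → ℝ} (hβ : Continuous β) (a t x : ℝ) :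
    Real.exp (-∫ u in (0:ℝ)..(t + x), β (a + u)) =
      Real.exp (-∫ u in (0:ℝ)..t, β (a + u)) * Real.exp (-∫ u in (0:ℝ)..x, β (a + t + u)) := by
  have hβa : Continuous fun u => β (a + u) := by fun_prop
  rw [integral_zero_add_eq_add_integral_comp_add (hβa.intervalIntegrable _ _)
    (hβa.intervalIntegrable _ _), neg_add, Real.exp_add]
  simp only [add_assoc]

namespace IsDuhamelSol

variable {β f₀ : ℝ → ℝ} {f : ℝ → ℝ → ℝ}

theorem apply_zero (hf : IsDuhamelSol β f₀ f) {a : ℝ} (ha : 0 ≤ a) : f 0 a = f₀ a := by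
  simpa using hf.2.2 0 a le_rfl ha

theorem continuous_apply (hf : IsDuhamelSol β f₀ f) (s : ℝ) : Continuous (f s) :=
  hf.1.comp (Continuous.prodMk continuous_const continuous_id)

theorem exists_bound_apply (hf : IsDuhamelSol β f₀ f) {s : ℝ} (hs : 0 ≤ s) :
    ∃ C, ∀ a, 0 ≤ a → |f s a| ≤ C :=
  let ⟨C, hC⟩ := hf.2.1
  ⟨C, fun a ha => hC s a hs ha⟩

theorem comp_add_right (hβ : Continuous β) (hf : IsDuhamelSol β f₀ f) {s : ℝ} (hs : 0 ≤ s) :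
    IsDuhamelSol β (f s) (fun t a => f (t + s) a) := by
  obtain ⟨hcont, ⟨C, hC⟩, hduh⟩ := hf
  refine ⟨hcont.comp ((continuous_fst.add continuous_const).prodMk continuous_snd),
    ⟨C, fun t a ht ha => hC (t + s) a (by linarith) ha⟩, ?_⟩
  intro t a ht ha
  have hβa : Continuous fun u => β (a + u) := by fun_prop
  set G : ℝ → ℝ := fun τ =>
    Real.exp (-∫ u in (0:ℝ)..τ, β (a + u)) * β (a + τ) * f (t + s - τ) 0
  have hG : Continuous G := by
    have hprim := continuous_primitive (μ := volume) (fun _ _ => hβa.intervalIntegrable _ _) 0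
    exact ((Real.continuous_exp.comp hprim.neg).mul hβa).mul
      (hcont.comp ((continuous_const.sub continuous_id).prodMk continuous_const))
  have hsplit : ∫ τ in (0:ℝ)..(t + s), G τ = (∫ τ in (0:ℝ)..t, G τ) +
      Real.exp (-∫ u in (0:ℝ)..t, β (a + u)) * ∫ τ in (0:ℝ)..s,
        Real.exp (-∫ u in (0:ℝ)..τ, β (a + t + u)) * β (a + t + τ) * f (s - τ) 0 := by
    rw [integral_zero_add_eq_add_integral_comp_add (hG.intervalIntegrable _ _)
      (hG.intervalIntegrable _ _), ← intervalIntegral.integral_const_mul]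
    congr 1
    refine integral_congr fun τ _ => ?_
    simp only [G, exp_neg_integral_zero_add hβ, ← add_assoc, add_sub_add_left_eq_sub]
    ring
  have hGt : ∫ τ in (0:ℝ)..t, G τ = ∫ τ in (0:ℝ)..t,
      Real.exp (-∫ u in (0:ℝ)..τ, β (a + u)) * β (a + τ) * f (t - τ + s) 0 :=
    integral_congr fun τ _ => by simp only [G, sub_add_eq_add_sub]
  beta_reduce
  rw [hduh (t + s) a (by linarith) ha, hduh s (a + t) hs (by linarith), hsplit, ← hGt,
    exp_neg_integral_zero_add hβ a t s, add_assoc a t s]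
  ring

end IsDuhamelSol

theorem stmt8_general (β : ℝ → ℝ) (hβcont : Continuous β)
    (M : ℝ → (ℝ → ℝ) → ℝ → ℝ)
    (hM : ∀ f₀ : ℝ → ℝ, Continuous f₀ → (∃ C, ∀ a, 0 ≤ a → |f₀ a| ≤ C) →
      IsDuhamelSol β f₀ (fun t a => M t f₀ a))
    (huniq : ∀ (f₀ : ℝ → ℝ) (f g : ℝ → ℝ → ℝ), IsDuhamelSol β f₀ f →
      IsDuhamelSol β f₀ g → ∀ t a, 0 ≤ t → 0 ≤ a → f t a = g t a) :
    ∀ f : ℝ → ℝ, Continuous f → (∃ C, ∀ a, 0 ≤ a → |f a| ≤ C) →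
      (∀ a, 0 ≤ a → M 0 f a = f a) ∧
      (∀ s t, 0 ≤ s → 0 ≤ t → ∀ a, 0 ≤ a → M (t + s) f a = M t (M s f) a) := by
  intro f hfc hfb
  have hMf := hM f hfc hfb
  refine ⟨fun a ha => hMf.apply_zero ha, fun s t hs ht a ha => ?_⟩
  exact huniq (M s f) _ _ (hMf.comp_add_right hβcont hs)
    (hM (M s f) (hMf.continuous_apply s) (hMf.exists_bound_apply hs)) t a ht ha

/-- the solution operators `M_t f₀ := f(t,·)` of the dual renewal
equation form a semigroup: `M_0 f = f` and `M_{t+s} f = M_t (M_s f)`. -/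
theorem stmt8 (β : ℝ → ℝ) (βmax : ℝ) (hβcont : Continuous β)
    (hβpos : ∀ a, 0 ≤ a → 0 ≤ β a) (hβbd : ∀ a, 0 ≤ a → β a ≤ βmax)
    (M : ℝ → (ℝ → ℝ) → ℝ → ℝ)
    (hM : ∀ f₀ : ℝ → ℝ, Continuous f₀ → (∃ C, ∀ a, 0 ≤ a → |f₀ a| ≤ C) →
      IsDuhamelSol β f₀ (fun t a => M t f₀ a))
    (huniq : ∀ (f₀ : ℝ → ℝ) (f g : ℝ → ℝ → ℝ), IsDuhamelSol β f₀ f →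
      IsDuhamelSol β f₀ g → ∀ t a, 0 ≤ t → 0 ≤ a → f t a = g t a) :
    ∀ f : ℝ → ℝ, Continuous f → (∃ C, ∀ a, 0 ≤ a → |f a| ≤ C) →
      (∀ a, 0 ≤ a → M 0 f a = f a) ∧
      (∀ s t, 0 ≤ s → 0 ≤ t → ∀ a, 0 ≤ a → M (t + s) f a = M t (M s f) a) :=
  stmt8_general β hβcont M hM huniq
end
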